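/- arXiv:1206.0350 — 2 statements merged into one kernel-verified Lean document; each statement's English description precedes it below -/
import Mathlib

section
/- (Decay of the integrand underlying Theorem 3.) Suppose p ≥ 1, z is a nonzero complex number, and either μ < 0, or μ = 0 and |z| > v. Let t₀ be a fixed real number such that for every real σ none of the numbers b_j − β_j(σ+it₀) (1 ≤ j ≤ m), 1 − a_j + α_j(σ+it₀) (1 ≤ j ≤ n), 1 − b_j + β_j(σ+it₀) (m+1 ≤ j ≤ q), a_j − α_j(σ+it₀) (n+1 ≤ j ≤ p) is a nonpositive integer. Then |φ(σ + it₀)·z^{σ+it₀}| → 0 as σ → −∞. -/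
open Complex Finset Filter MeasureTheory Real

/-- The kernel `φ(s)` of the Mellin–Barnes integral defining the I-function. -/
noncomputable def phi (p q m n : ℕ) (α A : Fin p → ℝ) (a : Fin p → ℂ)
    (β B : Fin q → ℝ) (b : Fin q → ℂ) (s : ℂ) : ℂ :=
  ((∏ j ∈ univ.filter (fun j : Fin q => (j : ℕ) < m),
      Complex.Gamma (b j - (β j : ℂ) * s) ^ (B j : ℂ)) *
   (∏ j ∈ univ.filter (fun j : Fin p => (j : ℕ) < n),
      Complex.Gamma (1 - a j + (α j : ℂ) * s) ^ (A j : ℂ))) /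
  ((∏ j ∈ univ.filter (fun j : Fin q => m ≤ (j : ℕ)),
      Complex.Gamma (1 - b j + (β j : ℂ) * s) ^ (B j : ℂ)) *
   (∏ j ∈ univ.filter (fun j : Fin p => n ≤ (j : ℕ)),
      Complex.Gamma (a j - (α j : ℂ) * s) ^ (A j : ℂ)))

/-- `σ` is admissible: no Gamma argument in `φ(σ + it)` is a nonpositive integer. -/
def Admissible (p q m n : ℕ) (α : Fin p → ℝ) (a : Fin p → ℂ)
    (β : Fin q → ℝ) (b : Fin q → ℂ) (σ : ℝ) : Prop :=
  ∀ t : ℝ, ∀ k : ℕ,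
    (∀ j : Fin q, (j : ℕ) < m → b j - (β j : ℂ) * ((σ : ℂ) + t * Complex.I) ≠ -(k : ℂ)) ∧
    (∀ j : Fin p, (j : ℕ) < n → 1 - a j + (α j : ℂ) * ((σ : ℂ) + t * Complex.I) ≠ -(k : ℂ)) ∧
    (∀ j : Fin q, m ≤ (j : ℕ) → 1 - b j + (β j : ℂ) * ((σ : ℂ) + t * Complex.I) ≠ -(k : ℂ)) ∧
    (∀ j : Fin p, n ≤ (j : ℕ) → a j - (α j : ℂ) * ((σ : ℂ) + t * Complex.I) ≠ -(k : ℂ))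

noncomputable def Delta (p q m n : ℕ) (α A : Fin p → ℝ) (β B : Fin q → ℝ) : ℝ :=
  (∑ j ∈ univ.filter (fun j : Fin q => (j : ℕ) < m), B j * β j)
  - (∑ j ∈ univ.filter (fun j : Fin q => m ≤ (j : ℕ)), B j * β j)
  + (∑ j ∈ univ.filter (fun j : Fin p => (j : ℕ) < n), A j * α j)
  - (∑ j ∈ univ.filter (fun j : Fin p => n ≤ (j : ℕ)), A j * α j)

noncomputable def mu (p q : ℕ) (α A : Fin p → ℝ) (β B : Fin q → ℝ) : ℝ :=
  (∑ j, B j * β j) - (∑ j, A j * α j)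

noncomputable def nabla (p q : ℕ) (A : Fin p → ℝ) (a : Fin p → ℂ)
    (B : Fin q → ℝ) (b : Fin q → ℂ) : ℝ :=
  (∑ j, A j * ((a j).re - 1/2)) - (∑ j, B j * ((b j).re - 1/2))

noncomputable def vconst (p q : ℕ) (α A : Fin p → ℝ) (β B : Fin q → ℝ) : ℝ :=
  (∏ j, (β j) ^ (B j * β j)) / (∏ j, (α j) ^ (A j * α j))

/-!
Along the line `s = -u + i t₀`, every factor of `φ` has a logarithmic growth rate:
`‖Γ(w + k u)‖ = exp (k u log u + (k log k - k) u + o(u))`. On the real axis this is Stirling's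
formula, and `c Γ(x) ≤ ‖Γ(x + iτ)‖ ≤ Γ(x)` transfers it to horizontal lines. The factors whose
argument runs to the left are reciprocals of such factors by the reflection formula; this needs
`|sin π(x + iτ)| ≥ |sinh πτ| > 0`, i.e. that the line avoids the real axis, which is what the
condition on `t₀` guarantees. Multiplying out,
`‖φ(-u + i t₀) z^(-u + i t₀)‖ = exp (μ u log u + (log v - μ - log |z|) u + o(u))`,
which tends to `0` when `μ < 0`, or when `μ = 0` and `|z| > v`.
-/

open scoped Nat Topology

lemma tendsto_log_div_self : Tendsto (fun x => Real.log x / x) atTop (𝓝 0) :=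
  Real.isLittleO_log_id_atTop.tendsto_div_nhds_zero

/-- `HasLogGrowth f l c` says that `f u = exp (l u log u + c u + o(u))` as `u → ∞`. -/
def HasLogGrowth (f : ℝ → ℝ) (l c : ℝ) : Prop :=
  (∀ᶠ u in atTop, 0 < f u) ∧
    Tendsto (fun u => Real.log (f u) / u - l * Real.log u) atTop (𝓝 c)

lemma hasLogGrowth_const {k : ℝ} (hk : 0 < k) : HasLogGrowth (fun _ => k) 0 0 :=
  ⟨Eventually.of_forall fun _ => hk, by simpa using tendsto_const_nhds.div_atTop tendsto_id⟩

lemma hasLogGrowth_id : HasLogGrowth (fun u => u) 0 0 :=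
  ⟨eventually_gt_atTop 0, by simpa using tendsto_log_div_self⟩

lemma hasLogGrowth_exp_affine (k d : ℝ) : HasLogGrowth (fun u => Real.exp (k * u + d)) 0 k := by
  refine ⟨Eventually.of_forall fun _ => Real.exp_pos _, ?_⟩
  have hd : Tendsto (fun u : ℝ => k + d / u) atTop (𝓝 (k + 0)) :=
    tendsto_const_nhds.add (tendsto_const_nhds.div_atTop tendsto_id)
  rw [add_zero] at hd
  refine hd.congr' ?_
  filter_upwards [eventually_gt_atTop 0] with u hu
  rw [Real.log_exp]
  field_simp
  ring

lemma hasLogGrowth_of_reparam {F y : ℝ → ℝ} {k l c : ℝ} (hk : 0 < k)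
    (hy : Tendsto (fun u => y u / u) atTop (𝓝 k))
    (hdev : Tendsto (fun u => (y u - k * u) * Real.log u / u) atTop (𝓝 0))
    (hF : ∀ᶠ u in atTop, 0 < F u)
    (hG : Tendsto (fun u => Real.log (F u) / y u - l * Real.log (y u)) atTop (𝓝 c)) :
    HasLogGrowth F (k * l) (k * c + k * l * Real.log k) := by
  refine ⟨hF, ?_⟩
  have hlim := (hy.mul hG).add
    ((((Real.continuous_mul_log.tendsto k).comp hy).add hdev).const_mul l)
  convert hlim.congr' ?_ using 2
  · ring
  filter_upwards [hy.eventually (lt_mem_nhds hk), eventually_gt_atTop 0] with u hρ hu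
  have hyu : 0 < y u := by simpa [div_pos_iff_of_pos_right hu] using hρ
  simp only [Function.comp_apply]
  rw [Real.log_div hyu.ne' hu.ne']
  field_simp
  ring

namespace HasLogGrowth

variable {f g h : ℝ → ℝ} {l l' c c' : ℝ}

lemma congr' (hf : HasLogGrowth f l c) (hfg : f =ᶠ[atTop] g) : HasLogGrowth g l c :=
  ⟨(hf.1.and hfg).mono fun _ hu => hu.2 ▸ hu.1,
    hf.2.congr' (hfg.mono fun u hu => by simp only [hu])⟩

lemma mul (hf : HasLogGrowth f l c) (hg : HasLogGrowth g l' c') :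
    HasLogGrowth (fun u => f u * g u) (l + l') (c + c') := by
  refine ⟨(hf.1.and hg.1).mono fun _ hu => mul_pos hu.1 hu.2, (hf.2.add hg.2).congr' ?_⟩
  filter_upwards [hf.1, hg.1] with u hfu hgu
  rw [Real.log_mul hfu.ne' hgu.ne']
  ring

lemma inv (hf : HasLogGrowth f l c) : HasLogGrowth (fun u => (f u)⁻¹) (-l) (-c) := by
  refine ⟨hf.1.mono fun _ hu => inv_pos.mpr hu, hf.2.neg.congr fun u => ?_⟩
  rw [Real.log_inv]
  ring

lemma rpow (hf : HasLogGrowth f l c) (e : ℝ) :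
    HasLogGrowth (fun u => f u ^ e) (e * l) (e * c) := by
  refine ⟨hf.1.mono fun _ hu => Real.rpow_pos_of_pos hu e, (hf.2.const_mul e).congr' ?_⟩
  filter_upwards [hf.1] with u hu
  rw [Real.log_rpow hu]
  ring

lemma prod {ι : Type*} (s : Finset ι) {f : ι → ℝ → ℝ} {l c : ι → ℝ}
    (hf : ∀ i ∈ s, HasLogGrowth (f i) (l i) (c i)) :
    HasLogGrowth (fun u => ∏ i ∈ s, f i u) (∑ i ∈ s, l i) (∑ i ∈ s, c i) := by
  have hpos : ∀ᶠ u in atTop, ∀ i ∈ s, 0 < f i u :=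
    s.eventually_all.mpr fun i hi => (hf i hi).1
  refine ⟨hpos.mono fun _ hu => Finset.prod_pos hu,
    (tendsto_finsetSum s fun i hi => (hf i hi).2).congr' ?_⟩
  filter_upwards [hpos] with u hu
  rw [Real.log_prod fun i hi => (hu i hi).ne', Finset.sum_div, Finset.sum_mul,
    ← Finset.sum_sub_distrib]

lemma of_le_of_le (hg : HasLogGrowth g l c) (hh : HasLogGrowth h l c)
    (hgf : ∀ᶠ u in atTop, g u ≤ f u) (hfh : ∀ᶠ u in atTop, f u ≤ h u) :
    HasLogGrowth f l c := by
  refine ⟨(hg.1.and hgf).mono fun _ hu => hu.1.trans_le hu.2,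
    tendsto_of_tendsto_of_tendsto_of_le_of_le' hg.2 hh.2 ?_ ?_⟩
  · filter_upwards [hg.1, hgf, eventually_gt_atTop 0] with u hgu hgfu hu
    gcongr
  · filter_upwards [hg.1, hgf, hfh, eventually_gt_atTop 0] with u hgu hgfu hfhu hu
    gcongr
    exact hgu.trans_le hgfu

lemma comp_affine (hf : HasLogGrowth f l c) {k : ℝ} (hk : 0 < k) (r : ℝ) :
    HasLogGrowth (fun u => f (k * u + r)) (k * l) (k * c + k * l * Real.log k) := by
  have hy : Tendsto (fun u => k * u + r) atTop atTop :=
    tendsto_atTop_add_const_right _ r (tendsto_id.const_mul_atTop hk)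
  refine hasLogGrowth_of_reparam hk ?_ ?_ (hy.eventually hf.1) (hf.2.comp hy)
  · have hratio := (tendsto_const_nhds (x := k)).add
      ((tendsto_const_nhds (x := r)).div_atTop tendsto_id)
    rw [add_zero] at hratio
    refine hratio.congr' ?_
    filter_upwards [eventually_gt_atTop 0] with u hu
    rw [id_eq, add_div, mul_div_cancel_right₀ k hu.ne']
  · have hdev := tendsto_log_div_self.const_mul r
    rw [mul_zero] at hdev
    exact hdev.congr fun u => by ring

lemma tendsto_zero (hf : HasLogGrowth f l c) (hlc : l < 0 ∨ l = 0 ∧ c < 0) :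
    Tendsto f atTop (𝓝 0) := by
  have hlog : Tendsto (fun u => Real.log (f u) / u * u) atTop atBot := by
    rcases hlc with hl | ⟨rfl, hc⟩
    · have hbot : Tendsto (fun u => Real.log (f u) / u) atTop atBot :=
        (hf.2.add_atBot (Real.tendsto_log_atTop.const_mul_atTop_of_neg hl)).congr
          fun u => by ring
      exact hbot.atBot_mul_atTop₀ tendsto_id
    · exact Tendsto.neg_mul_atTop hc (by simpa using hf.2) tendsto_id
  refine (Real.tendsto_exp_atBot.comp hlog).congr' ?_
  filter_upwards [hf.1, eventually_gt_atTop 0] with u hfu hu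
  simp [div_mul_cancel₀ _ hu.ne', Real.exp_log hfu]

end HasLogGrowth

lemma hasLogGrowth_of_bounds {f : ℝ → ℝ} {a b : ℝ} (ha : 0 < a)
    (hf : ∀ᶠ u in atTop, a ≤ f u ∧ f u ≤ b) : HasLogGrowth f 0 0 := by
  obtain ⟨u, hau, hub⟩ := hf.exists
  exact (hasLogGrowth_const ha).of_le_of_le (hasLogGrowth_const (ha.trans_le (hau.trans hub)))
    (hf.mono fun _ => And.left) (hf.mono fun _ => And.right)

lemma hasLogGrowth_comp_natFloor {a : ℕ → ℝ} {l c : ℝ} (ha : ∀ᶠ n in atTop, 0 < a n)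
    (h : Tendsto (fun n : ℕ => Real.log (a n) / n - l * Real.log n) atTop (𝓝 c)) :
    HasLogGrowth (fun x => a ⌊x⌋₊) l c := by
  have hfloor := hasLogGrowth_of_reparam (F := fun x => a ⌊x⌋₊) (y := fun x => (⌊x⌋₊ : ℝ))
    (l := l) one_pos tendsto_nat_floor_div_atTop ?_ (tendsto_nat_floor_atTop.eventually ha)
    (h.comp tendsto_nat_floor_atTop)
  · simpa using hfloor
  refine squeeze_zero_norm' ?_ (by simpa using tendsto_log_div_self.norm)
  filter_upwards [eventually_ge_atTop 1] with x hx
  have hdist : |(⌊x⌋₊ : ℝ) - 1 * x| ≤ 1 := by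
    rw [one_mul, abs_sub_comm, abs_of_nonneg (by linarith [Nat.floor_le (zero_le_one.trans hx)])]
    linarith [Nat.lt_floor_add_one x]
  rw [norm_div, norm_mul, Real.norm_eq_abs, Real.norm_eq_abs, Real.norm_eq_abs, mul_div_assoc]
  exact mul_le_of_le_one_left (by positivity) hdist

lemma tendsto_log_factorial_div_sub_log :
    Tendsto (fun n : ℕ => Real.log (n ! : ℝ) / n - Real.log n) atTop (𝓝 (-1)) := by
  have hstirling : Tendsto (fun n => Real.log (Stirling.stirlingSeq n)) atTop
      (𝓝 (Real.log (√π))) :=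
    (Real.continuousAt_log (by positivity)).tendsto.comp Stirling.tendsto_stirlingSeq_sqrt_pi
  have hlog2 : Tendsto (fun n : ℕ => Real.log (2 * n) / (2 * n)) atTop (𝓝 0) :=
    tendsto_log_div_self.comp (tendsto_natCast_atTop_atTop.const_mul_atTop two_pos)
  have hlim := ((hstirling.div_atTop tendsto_natCast_atTop_atTop).add hlog2).sub_const 1
  rw [zero_add, zero_sub] at hlim
  refine hlim.congr' ?_
  filter_upwards [eventually_gt_atTop 0] with n hn
  have hn' : (0 : ℝ) < n := Nat.cast_pos.mpr hn
  rw [Stirling.log_stirlingSeq_formula, Real.log_div hn'.ne' (Real.exp_pos 1).ne', Real.log_exp]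
  field_simp
  ring

lemma hasLogGrowth_Gamma : HasLogGrowth Real.Gamma 1 (-1) := by
  have hfac : HasLogGrowth (fun x => (⌊x⌋₊ ! : ℝ)) 1 (-1) :=
    hasLogGrowth_comp_natFloor (a := fun n => (n ! : ℝ)) (l := 1)
      (Eventually.of_forall fun n => by positivity)
      (by simpa using tendsto_log_factorial_div_sub_log)
  have hlower : HasLogGrowth (fun x => (⌊x⌋₊ ! : ℝ) * x⁻¹) 1 (-1) := by
    simpa using hfac.mul hasLogGrowth_id.inv
  have two_le_floor : ∀ x : ℝ, 2 ≤ x → (2 : ℝ) ≤ ⌊x⌋₊ := fun x hx => by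
    exact_mod_cast Nat.le_floor (by exact_mod_cast hx)
  refine hlower.of_le_of_le hfac ?_ ?_
  · filter_upwards [eventually_ge_atTop 2] with x hx
    have hfloor := two_le_floor x hx
    have hfac_eq : (⌊x⌋₊ ! : ℝ) = ⌊x⌋₊ * Real.Gamma ⌊x⌋₊ := by
      rw [← Real.Gamma_nat_eq_factorial, Real.Gamma_add_one (by positivity)]
    calc (⌊x⌋₊ ! : ℝ) * x⁻¹ ≤ (⌊x⌋₊ ! : ℝ) * (⌊x⌋₊ : ℝ)⁻¹ := by
          gcongr
          exact Nat.floor_le (by linarith)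
      _ = Real.Gamma ⌊x⌋₊ := by rw [hfac_eq]; field_simp
      _ ≤ Real.Gamma x := Real.Gamma_strictMonoOn_Ici.monotoneOn hfloor (by simpa using hx)
          (Nat.floor_le (by linarith))
  · filter_upwards [eventually_ge_atTop 2] with x hx
    rw [← Real.Gamma_nat_eq_factorial]
    exact Real.Gamma_strictMonoOn_Ici.monotoneOn (by simpa using hx)
      (by simp; linarith [two_le_floor x hx]) (Nat.lt_floor_add_one x).le

lemma norm_Gamma_le_Gamma_re {s : ℂ} (hs : 0 < s.re) : ‖Complex.Gamma s‖ ≤ Real.Gamma s.re := by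
  rw [Complex.Gamma_eq_integral hs, Real.Gamma_eq_integral hs, Complex.GammaIntegral]
  refine (norm_integral_le_integral_norm _).trans_eq
    (setIntegral_congr_fun measurableSet_Ioi fun t (ht : 0 < t) => ?_)
  rw [norm_mul, Complex.norm_of_nonneg (Real.exp_pos _).le,
    Complex.norm_cpow_eq_rpow_re_of_pos ht, Complex.sub_re, Complex.one_re]

lemma mul_Gamma_add_one_le_norm_Gamma {c x τ : ℝ} (hx : 0 < x)
    (h : c * Real.Gamma x ≤ ‖Complex.Gamma (x + τ * I)‖) :
    c * Real.Gamma (x + 1) ≤ ‖Complex.Gamma ((x + 1 : ℝ) + τ * I)‖ := by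
  have hne : (x : ℂ) + τ * I ≠ 0 := fun h0 => by
    simpa [hx.ne'] using congrArg Complex.re h0
  rw [Real.Gamma_add_one hx.ne', show ((x + 1 : ℝ) : ℂ) + τ * I = (x + τ * I) + 1 by
    push_cast; ring, Complex.Gamma_add_one _ hne, norm_mul, mul_left_comm]
  calc x * (c * Real.Gamma x) ≤ x * ‖Complex.Gamma (x + τ * I)‖ :=
        mul_le_mul_of_nonneg_left h hx.le
    _ ≤ ‖(x : ℂ) + τ * I‖ * ‖Complex.Gamma (x + τ * I)‖ :=
        mul_le_mul_of_nonneg_right (by simpa using Complex.re_le_norm ((x : ℂ) + τ * I))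
          (norm_nonneg _)

/-- The ratio `‖Γ(x + iτ)‖ / Γ(x)` does not decrease under `x ↦ x + 1`, so its minimum over
`[1, 2]` bounds it on `[1, ∞)`. -/
lemma exists_pos_mul_Gamma_le_norm_Gamma (τ : ℝ) :
    ∃ c > 0, ∀ x : ℝ, 1 ≤ x → c * Real.Gamma x ≤ ‖Complex.Gamma (x + τ * I)‖ := by
  have hcont : ContinuousOn (fun x : ℝ => ‖Complex.Gamma (x + τ * I)‖ / Real.Gamma x)
      (Set.Icc 1 2) := by
    refine ContinuousOn.div (fun x hx => ContinuousAt.continuousWithinAt ?_)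
      (Real.differentiableOn_Gamma_Ioi.continuousOn.mono fun x hx => by
        simp only [Set.mem_Ioi]; linarith [hx.1])
      fun x hx => (Real.Gamma_pos_of_pos (by linarith [hx.1])).ne'
    have hpole : ∀ m : ℕ, (x : ℂ) + τ * I ≠ -m := fun m h => by
      have := congrArg Complex.re h
      simp at this
      linarith [hx.1, (Nat.cast_nonneg m : (0 : ℝ) ≤ m)]
    exact ((Complex.differentiableAt_Gamma _ hpole).continuousAt.comp
      (f := fun y : ℝ => (y : ℂ) + τ * I) (by fun_prop)).norm
  obtain ⟨x₀, hx₀, hmin⟩ := isCompact_Icc.exists_isMinOn (Set.nonempty_Icc.mpr one_le_two) hcont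
  have hx₀_pos : 0 < x₀ := by linarith [hx₀.1]
  set c := ‖Complex.Gamma (x₀ + τ * I)‖ / Real.Gamma x₀
  have hc : 0 < c := div_pos
    (norm_pos_iff.mpr (Complex.Gamma_ne_zero_of_re_pos (by simpa using hx₀_pos)))
    (Real.Gamma_pos_of_pos hx₀_pos)
  have hbound : ∀ N : ℕ, ∀ x : ℝ, 1 ≤ x → x ≤ N + 2 →
      c * Real.Gamma x ≤ ‖Complex.Gamma (x + τ * I)‖ := by
    intro N
    induction N with
    | zero =>
      intro x hx1 hx2
      rw [← le_div_iff₀ (Real.Gamma_pos_of_pos (by linarith))]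
      exact hmin ⟨hx1, by simpa using hx2⟩
    | succ N ih =>
      intro x hx1 hx2
      rcases le_or_gt x (N + 2) with hxN | hxN
      · exact ih x hx1 hxN
      have hshift := mul_Gamma_add_one_le_norm_Gamma (by linarith)
        (ih (x - 1) (by linarith) (by push_cast at hx2; linarith))
      rwa [sub_add_cancel] at hshift
  exact ⟨c, hc, fun x hx => hbound ⌈x⌉₊ x hx (by linarith [Nat.le_ceil x])⟩

lemma hasLogGrowth_norm_Gamma_add_mul_I (τ : ℝ) :
    HasLogGrowth (fun x : ℝ => ‖Complex.Gamma (x + τ * I)‖) 1 (-1) := by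
  obtain ⟨c, hc, hle⟩ := exists_pos_mul_Gamma_le_norm_Gamma τ
  refine HasLogGrowth.of_le_of_le (by simpa using (hasLogGrowth_const hc).mul hasLogGrowth_Gamma)
    hasLogGrowth_Gamma ((eventually_ge_atTop 1).mono hle) ?_
  filter_upwards [eventually_gt_atTop 0] with x hx
  simpa using norm_Gamma_le_Gamma_re (s := x + τ * I) (by simpa using hx)

lemma norm_sin_sq (z : ℂ) : ‖Complex.sin z‖ ^ 2 = Real.sin z.re ^ 2 + Real.sinh z.im ^ 2 := by
  have hsin : Complex.sin z = ((Real.sin z.re * Real.cosh z.im : ℝ) : ℂ) +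
      ((Real.cos z.re * Real.sinh z.im : ℝ) : ℂ) * I := by
    rw [Complex.sin_eq]
    push_cast
    ring
  rw [hsin, Complex.sq_norm, Complex.normSq_add_mul_I, mul_pow, mul_pow, Real.cosh_sq]
  linear_combination Real.sinh z.im ^ 2 * Real.sin_sq_add_cos_sq z.re

lemma abs_sinh_im_le_norm_sin (z : ℂ) : |Real.sinh z.im| ≤ ‖Complex.sin z‖ :=
  sq_le_sq₀ (abs_nonneg _) (norm_nonneg _) |>.mp <| by
    rw [sq_abs, norm_sin_sq]
    nlinarith [sq_nonneg (Real.sin z.re)]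

lemma norm_sin_le_cosh_im (z : ℂ) : ‖Complex.sin z‖ ≤ Real.cosh z.im :=
  sq_le_sq₀ (norm_nonneg _) (Real.cosh_pos _).le |>.mp <| by
    rw [norm_sin_sq, Real.cosh_sq]
    nlinarith [Real.sin_sq_le_one z.re]

lemma hasLogGrowth_norm_Gamma_neg_add_mul_I {τ : ℝ} (hτ : τ ≠ 0) :
    HasLogGrowth (fun x : ℝ => ‖Complex.Gamma (-x + τ * I)‖) (-1) 1 := by
  have hsin : HasLogGrowth (fun x : ℝ => ‖Complex.sin (π * (-x + τ * I))‖) 0 0 := by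
    refine hasLogGrowth_of_bounds (a := |Real.sinh (π * τ)|) (b := Real.cosh (π * τ))
      (by positivity) (Eventually.of_forall fun x => ?_)
    have him : (π * (-(x : ℂ) + τ * I)).im = π * τ := by simp
    exact ⟨him ▸ abs_sinh_im_le_norm_sin _, him ▸ norm_sin_le_cosh_im _⟩
  have hreflect : HasLogGrowth (fun x : ℝ => ‖Complex.Gamma (1 - (-x + τ * I))‖) 1 (-1) := by
    have h := (hasLogGrowth_norm_Gamma_add_mul_I (-τ)).comp_affine one_pos 1
    simp only [one_mul, mul_one, Real.log_one, mul_zero, add_zero] at h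
    refine h.congr' (Eventually.of_forall fun x => ?_)
    push_cast
    ring_nf
  have h := (hasLogGrowth_const Real.pi_pos).mul (hsin.mul hreflect).inv
  simp only [zero_add, neg_neg] at h
  refine h.congr' ?_
  filter_upwards [eventually_gt_atTop 0] with x hx
  have hGamma : Complex.Gamma (1 - (-x + τ * I)) ≠ 0 :=
    Complex.Gamma_ne_zero_of_re_pos (by simp; linarith)
  have hsin0 : Complex.sin (π * (-x + τ * I)) ≠ 0 := fun h0 => by
    have := (abs_sinh_im_le_norm_sin (π * (-x + τ * I))).trans_eq (by rw [h0, norm_zero])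
    simp [hτ, Real.pi_ne_zero] at this
  have hrefl := congrArg norm (Complex.Gamma_mul_Gamma_one_sub (-x + τ * I))
  rw [norm_mul, norm_div, Complex.norm_of_nonneg Real.pi_pos.le,
    eq_div_iff (by positivity)] at hrefl
  rw [← div_eq_mul_inv, div_eq_iff (by positivity)]
  linear_combination -hrefl

lemma hasLogGrowth_norm_Gamma_add_mul (w : ℂ) {k : ℝ} (hk : 0 < k) :
    HasLogGrowth (fun u : ℝ => ‖Complex.Gamma (w + k * u)‖) k (k * Real.log k - k) := by
  have h := (hasLogGrowth_norm_Gamma_add_mul_I w.im).comp_affine hk w.re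
  refine (by convert h using 1 <;> ring : HasLogGrowth _ k _).congr'
    (Eventually.of_forall fun u => ?_)
  congr 2
  apply Complex.ext <;> simp [add_comm]

lemma hasLogGrowth_norm_Gamma_sub_mul {w : ℂ} (hw : w.im ≠ 0) {k : ℝ} (hk : 0 < k) :
    HasLogGrowth (fun u : ℝ => ‖Complex.Gamma (w - k * u)‖) (-k) (k - k * Real.log k) := by
  have h := (hasLogGrowth_norm_Gamma_neg_add_mul_I hw).comp_affine hk (-w.re)
  refine (by convert h using 1 <;> ring : HasLogGrowth _ (-k) _).congr'
    (Eventually.of_forall fun u => ?_)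
  congr 2
  apply Complex.ext <;> simp; ring

/-- The contribution of one parameter pair `(c, k)` with exponent `e` to `φ(s)`: `Γ(c - k s)^e`
if it sits in the numerator (`P`), and `Γ(1 - c + k s)^(-e)` otherwise. -/
noncomputable def gammaFactor (P : Prop) [Decidable P] (c : ℂ) (k e : ℝ) (s : ℂ) : ℂ :=
  if P then Complex.Gamma (c - k * s) ^ (e : ℂ) else (Complex.Gamma (1 - c + k * s) ^ (e : ℂ))⁻¹

lemma phi_eq_prod_gammaFactor (p q m n : ℕ) (α A : Fin p → ℝ) (a : Fin p → ℂ)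
    (β B : Fin q → ℝ) (b : Fin q → ℂ) (s : ℂ) :
    phi p q m n α A a β B b s =
      (∏ j : Fin q, gammaFactor ((j : ℕ) < m) (b j) (β j) (B j) s) *
        (∏ j : Fin p, gammaFactor (n ≤ (j : ℕ)) (a j) (α j) (A j) s)⁻¹ := by
  simp only [phi, gammaFactor, Finset.prod_ite, not_lt, not_le, Finset.prod_inv_distrib]
  rw [mul_inv, inv_inv, div_eq_mul_inv, mul_inv]
  ring

lemma im_ne_zero_of_forall_add_mul_ne_zero {w : ℂ} {k : ℝ} (hk : k ≠ 0)
    (h : ∀ σ : ℝ, w + k * σ ≠ 0) : w.im ≠ 0 := fun him => by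
  refine h (-w.re / k) (Complex.ext ?_ ?_) <;> simp [him]
  field_simp
  ring

lemma hasLogGrowth_norm_gammaFactor (P : Prop) [Decidable P] (c : ℂ) {k : ℝ} (hk : 0 < k)
    (e t : ℝ) (hpole : ¬P → ∀ σ : ℝ, 1 - c + k * (σ + t * I) ≠ 0) :
    HasLogGrowth (fun u : ℝ => ‖gammaFactor P c k e (-u + t * I)‖)
      (e * k) (e * (k * Real.log k - k)) := by
  by_cases hP : P
  · refine ((hasLogGrowth_norm_Gamma_add_mul (c - k * (t * I)) hk).rpow e).congr'
      (Eventually.of_forall fun u => ?_)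
    simp only [gammaFactor, if_pos hP, Complex.norm_cpow_real]
    ring_nf
  · have hw : (1 - c + k * (t * I)).im ≠ 0 :=
      im_ne_zero_of_forall_add_mul_ne_zero hk.ne' fun σ => by
        convert hpole hP σ using 1
        ring
    refine (by convert ((hasLogGrowth_norm_Gamma_sub_mul hw hk).rpow e).inv using 1 <;> ring :
      HasLogGrowth _ (e * k) _).congr' (Eventually.of_forall fun u => ?_)
    simp only [gammaFactor, if_neg hP, norm_inv, Complex.norm_cpow_real]
    ring_nf

section IFunction

variable {p q : ℕ} {α A : Fin p → ℝ} {β B : Fin q → ℝ}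

lemma vconst_pos (hα : ∀ j, 0 < α j) (hβ : ∀ j, 0 < β j) : 0 < vconst p q α A β B :=
  div_pos (Finset.prod_pos fun j _ => Real.rpow_pos_of_pos (hβ j) _)
    (Finset.prod_pos fun j _ => Real.rpow_pos_of_pos (hα j) _)

lemma log_vconst (hα : ∀ j, 0 < α j) (hβ : ∀ j, 0 < β j) :
    Real.log (vconst p q α A β B) =
      ∑ j, B j * β j * Real.log (β j) - ∑ j, A j * α j * Real.log (α j) := by
  rw [vconst, Real.log_div (Finset.prod_pos fun j _ => Real.rpow_pos_of_pos (hβ j) _).ne'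
      (Finset.prod_pos fun j _ => Real.rpow_pos_of_pos (hα j) _).ne',
    Real.log_prod fun j _ => (Real.rpow_pos_of_pos (hβ j) _).ne',
    Real.log_prod fun j _ => (Real.rpow_pos_of_pos (hα j) _).ne']
  simp only [Real.log_rpow (hβ _), Real.log_rpow (hα _)]

lemma hasLogGrowth_norm_phi {m n : ℕ} {a : Fin p → ℂ} {b : Fin q → ℂ}
    (hα : ∀ j, 0 < α j) (hβ : ∀ j, 0 < β j) (t : ℝ)
    (hpole_b : ∀ j : Fin q, m ≤ (j : ℕ) → ∀ σ : ℝ, 1 - b j + β j * (σ + t * I) ≠ 0)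
    (hpole_a : ∀ j : Fin p, (j : ℕ) < n → ∀ σ : ℝ, 1 - a j + α j * (σ + t * I) ≠ 0) :
    HasLogGrowth (fun u : ℝ => ‖phi p q m n α A a β B b (-u + t * I)‖)
      (mu p q α A β B) (Real.log (vconst p q α A β B) - mu p q α A β B) := by
  have hq := HasLogGrowth.prod univ fun (j : Fin q) _ => hasLogGrowth_norm_gammaFactor
    ((j : ℕ) < m) (b j) (hβ j) (B j) t fun h => hpole_b j (not_lt.mp h)
  have hp := HasLogGrowth.prod univ fun (j : Fin p) _ => hasLogGrowth_norm_gammaFactor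
    (n ≤ (j : ℕ)) (a j) (hα j) (A j) t fun h => hpole_a j (not_le.mp h)
  convert (hq.mul hp.inv).congr' (Eventually.of_forall fun u => ?_) using 1
  · simp only [mu, sub_eq_add_neg]
  · simp only [log_vconst hα hβ, mu, mul_sub, Finset.sum_sub_distrib, ← mul_assoc]
    ring
  · simp only [phi_eq_prod_gammaFactor, norm_mul, norm_inv, norm_prod]

end IFunction

lemma hasLogGrowth_norm_cpow {z : ℂ} (hz : z ≠ 0) (t : ℝ) :
    HasLogGrowth (fun u : ℝ => ‖z ^ (-u + t * I)‖) 0 (-Real.log ‖z‖) := by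
  refine (hasLogGrowth_exp_affine (-Real.log ‖z‖) (-(arg z * t))).congr'
    (Eventually.of_forall fun u => ?_)
  dsimp only
  rw [Complex.norm_cpow_of_ne_zero hz, Real.rpow_def_of_pos (norm_pos_iff.mpr hz),
    ← Real.exp_sub]
  simp
  ring_nf

theorem theorem3_decay_general (p q m n : ℕ)
    (α A : Fin p → ℝ) (a : Fin p → ℂ) (β B : Fin q → ℝ) (b : Fin q → ℂ)
    (hα : ∀ j, 0 < α j) (hβ : ∀ j, 0 < β j)
    (z : ℂ) (hz : z ≠ 0)
    (hcase : mu p q α A β B < 0 ∨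
      (mu p q α A β B = 0 ∧ vconst p q α A β B < ‖z‖))
    (t₀ : ℝ)
    (ht₀ : ∀ σ : ℝ, ∀ k : ℕ,
      (∀ j : Fin q, (j : ℕ) < m →
        b j - (β j : ℂ) * ((σ : ℂ) + t₀ * Complex.I) ≠ -(k : ℂ)) ∧
      (∀ j : Fin p, (j : ℕ) < n →
        1 - a j + (α j : ℂ) * ((σ : ℂ) + t₀ * Complex.I) ≠ -(k : ℂ)) ∧
      (∀ j : Fin q, m ≤ (j : ℕ) →
        1 - b j + (β j : ℂ) * ((σ : ℂ) + t₀ * Complex.I) ≠ -(k : ℂ)) ∧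
      (∀ j : Fin p, n ≤ (j : ℕ) →
        a j - (α j : ℂ) * ((σ : ℂ) + t₀ * Complex.I) ≠ -(k : ℂ))) :
    Tendsto (fun σ : ℝ =>
        ‖phi p q m n α A a β B b ((σ : ℂ) + t₀ * Complex.I) *
          z ^ ((σ : ℂ) + t₀ * Complex.I)‖)
      atBot (nhds 0) := by
  have hgrowth := (hasLogGrowth_norm_phi (A := A) (B := B) hα hβ t₀
    (fun j hj σ => by simpa using (ht₀ σ 0).2.2.1 j hj)
    (fun j hj σ => by simpa using (ht₀ σ 0).2.1 j hj)).mul (hasLogGrowth_norm_cpow hz t₀)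
  rw [← tendsto_comp_neg_atTop_iff]
  refine (hgrowth.tendsto_zero ?_).congr fun u => by push_cast; rw [norm_mul]
  rcases hcase with hμ | ⟨hμ, hv⟩
  · exact Or.inl (by simpa using hμ)
  · refine Or.inr ⟨by simpa using hμ, ?_⟩
    have := Real.log_lt_log (vconst_pos hα hβ) hv
    linarith

/-- Decay of the integrand underlying Theorem 3: if `p ≥ 1` and either `μ < 0`, or
`μ = 0` and `|z| > v`, then `|φ(σ+it₀) z^{σ+it₀}| → 0` as `σ → -∞` along any
horizontal line avoiding the singularities. -/
theorem theorem3_decay (p q m n : ℕ) (hm : m ≤ q) (hn : n ≤ p) (hp : 1 ≤ p)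
    (α A : Fin p → ℝ) (a : Fin p → ℂ) (β B : Fin q → ℝ) (b : Fin q → ℂ)
    (hα : ∀ j, 0 < α j) (hA : ∀ j, 0 < A j) (hβ : ∀ j, 0 < β j) (hB : ∀ j, 0 < B j)
    (z : ℂ) (hz : z ≠ 0)
    (hcase : mu p q α A β B < 0 ∨
      (mu p q α A β B = 0 ∧ vconst p q α A β B < ‖z‖))
    (t₀ : ℝ)
    (ht₀ : ∀ σ : ℝ, ∀ k : ℕ,
      (∀ j : Fin q, (j : ℕ) < m →
        b j - (β j : ℂ) * ((σ : ℂ) + t₀ * Complex.I) ≠ -(k : ℂ)) ∧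
      (∀ j : Fin p, (j : ℕ) < n →
        1 - a j + (α j : ℂ) * ((σ : ℂ) + t₀ * Complex.I) ≠ -(k : ℂ)) ∧
      (∀ j : Fin q, m ≤ (j : ℕ) →
        1 - b j + (β j : ℂ) * ((σ : ℂ) + t₀ * Complex.I) ≠ -(k : ℂ)) ∧
      (∀ j : Fin p, n ≤ (j : ℕ) →
        a j - (α j : ℂ) * ((σ : ℂ) + t₀ * Complex.I) ≠ -(k : ℂ))) :
    Tendsto (fun σ : ℝ =>
        ‖phi p q m n α A a β B b ((σ : ℂ) + t₀ * Complex.I) *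
          z ^ ((σ : ℂ) + t₀ * Complex.I)‖)
      atBot (nhds 0) :=
  theorem3_decay_general p q m n α A a β B b hα hβ z hz hcase t₀ ht₀
end

section
/- (Property (7.4): argument rescaling.) Let c > 0 be real and let z be a nonzero complex number with |Arg z| < π/c (so that (z^c)^s = z^{cs} for every complex s). Let σ be admissible with t ↦ φ(σ+it)·z^{σ+it} integrable on ℝ. Let φ_c be the function built in the same way as φ but with α_j replaced by c·α_j (1 ≤ j ≤ p) and β_j replaced by c·β_j (1 ≤ j ≤ q), the a_j, b_j, A_j, B_j unchanged (so φ_c(s) = φ(c s)). Then (2π)^{−1} ∫_ℝ φ(σ+it)·z^{σ+it} dt = c · (2π)^{−1} ∫_ℝ φ_c(σ/c + it)·(z^c)^{σ/c + it} dt. -/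
open Complex Finset Filter MeasureTheory Real

/-! Since `φ_c(s) = φ(c s)` and, for `|Arg z| < π/c`, `(z^c)^s = z^{c s}`, the integrand on the
right at `t` is the integrand on the left at `c t`; the substitution `u = c t` produces the
factor `c`. -/

lemma phi_mul_params (p q m n : ℕ) (α A : Fin p → ℝ) (a : Fin p → ℂ)
    (β B : Fin q → ℝ) (b : Fin q → ℂ) (c : ℝ) (s : ℂ) :
    phi p q m n (fun j => c * α j) A a (fun j => c * β j) B b s =
      phi p q m n α A a β B b ((c : ℂ) * s) := by
  simp only [phi]
  congr 1 <;> congr 1 <;>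
  · refine Finset.prod_congr rfl fun j _ => ?_
    congr 2
    push_cast
    ring

lemma Complex.cpow_ofReal_cpow_of_abs_arg_lt {z : ℂ} {c : ℝ} (hc : 0 < c)
    (harg : |z.arg| < π / c) (s : ℂ) :
    (z ^ (c : ℂ)) ^ s = z ^ ((c : ℂ) * s) := by
  have him : (Complex.log z * c).im = z.arg * c := by
    simp [Complex.mul_im, Complex.log_im]
  have habs : |z.arg * c| < π := by
    rwa [abs_mul, abs_of_pos hc, ← lt_div_iff₀ hc]
  rw [← Complex.cpow_mul] <;> rw [him] <;> linarith [abs_lt.mp habs]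

lemma ofReal_mul_div_add_mul_I {c : ℝ} (hc : c ≠ 0) (σ t : ℝ) :
    (c : ℂ) * (((σ / c : ℝ) : ℂ) + t * I) = (σ : ℂ) + (c * t : ℝ) * I := by
  have hc' : (c : ℂ) ≠ 0 := by exact_mod_cast hc
  push_cast
  field_simp

theorem property_7_4_general (p q m n : ℕ)
    (α A : Fin p → ℝ) (a : Fin p → ℂ) (β B : Fin q → ℝ) (b : Fin q → ℂ)
    (c : ℝ) (hc : 0 < c) (z : ℂ) (harg : |z.arg| < π / c)
    (σ : ℝ) :
    (2 * (π : ℂ))⁻¹ * (∫ t : ℝ,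
        phi p q m n α A a β B b ((σ : ℂ) + t * Complex.I) *
          z ^ ((σ : ℂ) + t * Complex.I)) =
      (c : ℂ) * ((2 * (π : ℂ))⁻¹ * ∫ t : ℝ,
        phi p q m n (fun j => c * α j) A a (fun j => c * β j) B b
            (((σ / c : ℝ) : ℂ) + t * Complex.I) *
          (z ^ (c : ℂ)) ^ (((σ / c : ℝ) : ℂ) + t * Complex.I)) := by
  set g : ℝ → ℂ := fun u =>
    phi p q m n α A a β B b ((σ : ℂ) + u * I) * z ^ ((σ : ℂ) + u * I)
  have rescaled (t : ℝ) :
      phi p q m n (fun j => c * α j) A a (fun j => c * β j) B b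
          (((σ / c : ℝ) : ℂ) + t * I) * (z ^ (c : ℂ)) ^ (((σ / c : ℝ) : ℂ) + t * I) =
        g (c * t) := by
    rw [phi_mul_params, Complex.cpow_ofReal_cpow_of_abs_arg_lt hc harg,
      ofReal_mul_div_add_mul_I hc.ne']
  simp_rw [rescaled, Measure.integral_comp_mul_left g c, Complex.real_smul,
    abs_of_pos (inv_pos.mpr hc)]
  have hc' : (c : ℂ) ≠ 0 := by exact_mod_cast hc.ne'
  push_cast
  field_simp

/-- Property (7.4): argument rescaling. For `c > 0` with `|Arg z| < π/c`,
the I-function with parameters `(a_j, α_j, A_j), (b_j, β_j, B_j)` at `z` equals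
`c` times the I-function with parameters `(a_j, cα_j, A_j), (b_j, cβ_j, B_j)`
at `z^c`, along the rescaled contour. -/
theorem property_7_4 (p q m n : ℕ) (hm : m ≤ q) (hn : n ≤ p)
    (α A : Fin p → ℝ) (a : Fin p → ℂ) (β B : Fin q → ℝ) (b : Fin q → ℂ)
    (hα : ∀ j, 0 < α j) (hA : ∀ j, 0 < A j) (hβ : ∀ j, 0 < β j) (hB : ∀ j, 0 < B j)
    (c : ℝ) (hc : 0 < c) (z : ℂ) (hz : z ≠ 0) (harg : |z.arg| < π / c)
    (σ : ℝ) (hσ : Admissible p q m n α a β b σ)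
    (hint : Integrable (fun t : ℝ =>
      phi p q m n α A a β B b ((σ : ℂ) + t * Complex.I) *
        z ^ ((σ : ℂ) + t * Complex.I))) :
    (2 * (π : ℂ))⁻¹ * (∫ t : ℝ,
        phi p q m n α A a β B b ((σ : ℂ) + t * Complex.I) *
          z ^ ((σ : ℂ) + t * Complex.I)) =
      (c : ℂ) * ((2 * (π : ℂ))⁻¹ * ∫ t : ℝ,
        phi p q m n (fun j => c * α j) A a (fun j => c * β j) B b
            (((σ / c : ℝ) : ℂ) + t * Complex.I) *
          (z ^ (c : ℂ)) ^ (((σ / c : ℝ) : ℂ) + t * Complex.I)) :=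
  property_7_4_general p q m n α A a β B b c hc z harg σ
end
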